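/- Let F be a toy model. If F has no wandering domain, then 𝒞(F), the set of points whose forward orbit meets the critical line, is dense in Dom(F). -/
import Mathlib


open Set Filter Topology

noncomputable section

/-- The domain of a toy model: the disjoint union of the left rectangle
`[-1,0] × [0,1]` (where the points with first coordinate `0` are the points
`(0⁻, y)`) and the right rectangle `[0,1] × [0,1]` (where the points with first
coordinate `0` are the points `(0⁺, y)`).  The disjoint-union topology is exactly
the topology described for `Dom(F)`. -/
abbrev Dom : Type :=
  (↥(Icc (-1:ℝ) 0) × ↥(Icc (0:ℝ) 1)) ⊕ (↥(Icc (0:ℝ) 1) × ↥(Icc (0:ℝ) 1))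

/-- First (horizontal) coordinate of a point of the domain. -/
def xval : Dom → ℝ
  | Sum.inl p => (p.1 : ℝ)
  | Sum.inr p => (p.1 : ℝ)

/-- Second (vertical) coordinate of a point of the domain. -/
def yval : Dom → ℝ
  | Sum.inl p => (p.2 : ℝ)
  | Sum.inr p => (p.2 : ℝ)

/-- The point of the left rectangle with coordinates `(x, y)` (coordinates are
clamped to the rectangle). -/
def inL (x y : ℝ) : Dom :=
  Sum.inl (projIcc (-1) 0 (by norm_num) x, projIcc 0 1 zero_le_one y)

/-- The point of the right rectangle with coordinates `(x, y)` (coordinates are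
clamped to the rectangle). -/
def inR (x y : ℝ) : Dom :=
  Sum.inr (projIcc 0 1 zero_le_one x, projIcc 0 1 zero_le_one y)

/-- A toy model for the Hénon family: a continuous one-parameter family
`y ↦ f(y)` of unimodal maps of `[-1,1]` with turning point `0` and
`f(y)(±1) = -1`, together with a Cantor map `k` (with `|k'| > γ > 1`) and its two
inverse branches `Kp`, `Km`. -/
structure ToyModel where
  f : ℝ → ℝ → ℝ          -- `f y x` is the unimodal map at parameter `y`
  k : ℝ → ℝ
  a : ℝ
  b : ℝ
  γ : ℝ
  Kp : ℝ → ℝ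
  Km : ℝ → ℝ
  f_cont : Continuous fun p : ℝ × ℝ => f p.1 p.2
  f_maps : ∀ y ∈ Icc (0:ℝ) 1, MapsTo (f y) (Icc (-1:ℝ) 1) (Icc (-1:ℝ) 1)
  f_left : ∀ y ∈ Icc (0:ℝ) 1, f y (-1) = -1
  f_right : ∀ y ∈ Icc (0:ℝ) 1, f y 1 = -1
  f_mono : ∀ y ∈ Icc (0:ℝ) 1, StrictMonoOn (f y) (Icc (-1:ℝ) 0)
  f_anti : ∀ y ∈ Icc (0:ℝ) 1, StrictAntiOn (f y) (Icc (0:ℝ) 1)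
  ha : 0 < a
  hab : a < b
  hb : b < 1
  k0 : k 0 = 0
  k1 : k 1 = 0
  ka : k a = 1
  kb : k b = 1
  k_diff : ∀ y ∈ Icc 0 a ∪ Icc b 1, DifferentiableAt ℝ k y
  hγ : 1 < γ
  k_expand : ∀ y ∈ Icc 0 a ∪ Icc b 1, γ < |deriv k y|
  Kp_mem : ∀ y ∈ Icc (0:ℝ) 1, Kp y ∈ Icc 0 a
  Kp_right_inv : ∀ y ∈ Icc (0:ℝ) 1, k (Kp y) = y
  Kp_left_inv : ∀ x ∈ Icc 0 a, Kp (k x) = x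
  Km_mem : ∀ y ∈ Icc (0:ℝ) 1, Km y ∈ Icc b 1
  Km_right_inv : ∀ y ∈ Icc (0:ℝ) 1, k (Km y) = y
  Km_left_inv : ∀ x ∈ Icc b 1, Km (k x) = x

/-- The dynamics of a toy model:
`F(x,y) = (f(y)(x), K_{sign x}(y))`, where the left rectangle (sign `-`, including
the points `0⁻`) uses the branch `K₋` and the right rectangle (sign `+`, including
the points `0⁺`) uses the branch `K₊`.  The image is placed in the left or right
rectangle according to the sign of its first coordinate. -/
def ToyModel.map (T : ToyModel) : Dom → Dom
  | Sum.inl q =>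
      if T.f (q.2 : ℝ) (q.1 : ℝ) ≤ 0 then
        inL (T.f (q.2 : ℝ) (q.1 : ℝ)) (T.Km (q.2 : ℝ))
      else inR (T.f (q.2 : ℝ) (q.1 : ℝ)) (T.Km (q.2 : ℝ))
  | Sum.inr q =>
      if T.f (q.2 : ℝ) (q.1 : ℝ) < 0 then
        inL (T.f (q.2 : ℝ) (q.1 : ℝ)) (T.Kp (q.2 : ℝ))
      else inR (T.f (q.2 : ℝ) (q.1 : ℝ)) (T.Kp (q.2 : ℝ))

/-- The critical line `ℒ_c = {(0^±, y) : y ∈ [0,1]}`. -/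
def critLine : Set Dom := {p | xval p = 0}

/-- `𝒞(T)`: the set of points whose forward orbit meets the critical line. -/
def critOrbit (T : ToyModel) : Set Dom := {p | ∃ ℓ : ℕ, T.map^[ℓ] p ∈ critLine}

/-- A (nondegenerate) horizontal open interval inside a fiber of the domain. -/
def IsHorizInterval (J : Set Dom) : Prop :=
  ∃ y ∈ Icc (0:ℝ) 1, ∃ x₁ x₂ : ℝ, x₁ < x₂ ∧
    ((Ioo x₁ x₂ ⊆ Icc (-1:ℝ) 0 ∧ J = (fun x => inL x y) '' Ioo x₁ x₂) ∨
     (Ioo x₁ x₂ ⊆ Icc (0:ℝ) 1 ∧ J = (fun x => inR x y) '' Ioo x₁ x₂))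

/-- The orbit of a point. -/
def orbitSet (T : ToyModel) (p : Dom) : Set Dom := Set.range fun n => T.map^[n] p

/-- `x` converges to the orbit of `p`: the iterates of `x` eventually enter any
open set containing the orbit of `p`. -/
def ConvergesToOrbit (T : ToyModel) (p x : Dom) : Prop :=
  ∀ U : Set Dom, IsOpen U → orbitSet T p ⊆ U → ∀ᶠ n in atTop, T.map^[n] x ∈ U

/-- The basin `𝓑(p)` of the orbit of `p`. -/
def basin (T : ToyModel) (p : Dom) : Set Dom := {x | ConvergesToOrbit T p x}

/-- `T` has a weakly attracting periodic point: a periodic point whose basin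
contains a (nondegenerate horizontal) interval. -/
def HasWeaklyAttractingPeriodicPoint (T : ToyModel) : Prop :=
  ∃ p : Dom, ∃ m : ℕ, 1 ≤ m ∧ T.map^[m] p = p ∧
    ∃ J : Set Dom, IsHorizInterval J ∧ J ⊆ basin T p

/-- `T` has an interval of periodic points: a horizontal interval all of whose
points are periodic. -/
def HasIntervalOfPeriodicPoints (T : ToyModel) : Prop :=
  ∃ J : Set Dom, IsHorizInterval J ∧ ∀ p ∈ J, ∃ m : ℕ, 1 ≤ m ∧ T.map^[m] p = p

/-- The non-wandering set `Ω(T)`. -/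
def nonwandering (T : ToyModel) : Set Dom :=
  {p | ∀ V : Set Dom, IsOpen V → p ∈ V → ∃ ℓ : ℕ, 1 ≤ ℓ ∧ (T.map^[ℓ] '' V ∩ V).Nonempty}


/-- A wandering domain: a nonempty open set whose iterates are pairwise disjoint
and never meet the critical line. -/
def HasWanderingDomain (T : ToyModel) : Prop :=
  ∃ V : Set Dom, V.Nonempty ∧ IsOpen V ∧
    (∀ n m : ℕ, n ≠ m → Disjoint (T.map^[n] '' V) (T.map^[m] '' V)) ∧
    ∀ n : ℕ, Disjoint (T.map^[n] '' V) critLine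

namespace ToyModel

variable (T : ToyModel)

/-- The union of the two Cantor pieces. -/
def C : Set ℝ := Icc (0:ℝ) T.a ∪ Icc T.b 1

lemma b_nonneg : (0:ℝ) ≤ T.b := (T.ha.trans T.hab).le

lemma a_le_one : T.a ≤ 1 := (T.hab.trans T.hb).le

lemma yval_mem (p : Dom) : yval p ∈ Icc (0:ℝ) 1 := by
  cases p with
  | inl q => exact q.2.2
  | inr q => exact q.2.2

lemma map_yval (p : Dom) :
    yval (T.map p) ∈ T.C ∧ T.k (yval (T.map p)) = yval p := by
  cases p with
  | inl q =>
    have hy : (q.2 : ℝ) ∈ Icc (0:ℝ) 1 := q.2.2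
    have hKm := T.Km_mem _ hy
    have hmem : T.Km (q.2:ℝ) ∈ Icc (0:ℝ) 1 := ⟨T.b_nonneg.trans hKm.1, hKm.2⟩
    have hyv : yval (T.map (Sum.inl q)) = T.Km (q.2:ℝ) := by
      simp only [ToyModel.map]
      split_ifs <;>
        simp [yval, inL, inR, projIcc_of_mem zero_le_one hmem]
    rw [hyv]
    exact ⟨Or.inr hKm, T.Km_right_inv _ hy⟩
  | inr q =>
    have hy : (q.2 : ℝ) ∈ Icc (0:ℝ) 1 := q.2.2
    have hKp := T.Kp_mem _ hy
    have hmem : T.Kp (q.2:ℝ) ∈ Icc (0:ℝ) 1 := ⟨hKp.1, hKp.2.trans T.a_le_one⟩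
    have hyv : yval (T.map (Sum.inr q)) = T.Kp (q.2:ℝ) := by
      simp only [ToyModel.map]
      split_ifs <;>
        simp [yval, inL, inR, projIcc_of_mem zero_le_one hmem]
    rw [hyv]
    exact ⟨Or.inl hKp, T.Kp_right_inv _ hy⟩

lemma iterate_k_yval (n : ℕ) (p : Dom) :
    T.k^[n] (yval (T.map^[n] p)) = yval p := by
  induction n generalizing p with
  | zero => simp
  | succ n ih =>
    rw [Function.iterate_succ_apply T.map, Function.iterate_succ_apply' T.k,
      ih (T.map p), (T.map_yval p).2]

lemma no_overlap {j n d : ℕ} (hd : 1 ≤ d) {p q : Dom}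
    (hpj : T.k^[j] (yval p) ∉ T.C)
    (hq : ∀ i < j, T.k^[i] (yval q) ∈ T.C)
    (heq : T.map^[n] p = T.map^[n + d] q) : False := by
  have h1 : yval p = yval (T.map^[d] q) := by
    have hv := congrArg yval heq
    rw [Function.iterate_add_apply] at hv
    calc yval p = T.k^[n] (yval (T.map^[n] p)) := (T.iterate_k_yval n p).symm
      _ = T.k^[n] (yval (T.map^[n] (T.map^[d] q))) := by rw [hv]
      _ = yval (T.map^[d] q) := T.iterate_k_yval n _
  apply hpj
  rw [h1]
  rcases le_or_gt d j with hdj | hjd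
  · have h2 : T.k^[j] (yval (T.map^[d] q)) = T.k^[j-d] (yval q) := by
      conv_lhs => rw [← Nat.sub_add_cancel hdj]
      rw [Function.iterate_add_apply, T.iterate_k_yval d q]
    rw [h2]
    exact hq _ (by omega)
  · have h2 : T.map^[d] q = T.map^[j] (T.map^[d-j] q) := by
      rw [← Function.iterate_add_apply]
      congr 1
      omega
    rw [h2, T.iterate_k_yval j]
    obtain ⟨m, hm⟩ : ∃ m, d - j = m + 1 := ⟨d - j - 1, by omega⟩
    rw [hm, Function.iterate_succ_apply']
    exact (T.map_yval _).1

lemma wandering_of_good {j : ℕ} {V : Set Dom} (hne : V.Nonempty) (hop : IsOpen V)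
    (hgood : ∀ p ∈ V, (∀ i < j, T.k^[i] (yval p) ∈ T.C) ∧ T.k^[j] (yval p) ∉ T.C)
    (hcrit : ∀ p ∈ V, p ∉ critOrbit T) : HasWanderingDomain T := by
  refine ⟨V, hne, hop, ?_, ?_⟩
  · intro n m hnm
    rw [Set.disjoint_left]
    rintro z ⟨p, hp, hzp⟩ ⟨q, hq, hzq⟩
    rcases lt_or_gt_of_ne hnm with hlt | hlt
    · have heq : T.map^[n] p = T.map^[n + (m - n)] q := by
        rw [show n + (m - n) = m by omega]
        exact hzp.trans hzq.symm
      exact T.no_overlap (by omega) (hgood p hp).2 (hgood q hq).1 heq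
    · have heq : T.map^[m] q = T.map^[m + (n - m)] p := by
        rw [show m + (n - m) = n by omega]
        exact hzq.trans hzp.symm
      exact T.no_overlap (by omega) (hgood q hq).2 (hgood p hp).1 heq
  · intro n
    rw [Set.disjoint_left]
    rintro z ⟨p, hp, hzp⟩ hzc
    exact hcrit p hp ⟨n, by rwa [hzp]⟩

lemma k_expand_interval {I : Set ℝ} (hI : I = Icc (0:ℝ) T.a ∨ I = Icc T.b 1)
    {x y : ℝ} (hx : x ∈ I) (hy : y ∈ I) (hxy : x < y) :
    T.γ * (y - x) ≤ |T.k y - T.k x| := by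
  have hIC : I ⊆ T.C := by
    rcases hI with h | h <;> rw [h]
    · exact Set.subset_union_left
    · exact Set.subset_union_right
  have hsub : Icc x y ⊆ I := by
    rcases hI with h | h <;> rw [h] at hx hy ⊢ <;> exact Icc_subset_Icc hx.1 hy.2
  have hdiff : ∀ z ∈ Icc x y, DifferentiableAt ℝ T.k z := fun z hz =>
    T.k_diff z (hIC (hsub hz))
  have hcont : ContinuousOn T.k (Icc x y) := fun z hz =>
    ((hdiff z hz).continuousAt).continuousWithinAt
  obtain ⟨c, hc, hslope⟩ := exists_deriv_eq_slope T.k hxy hcont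
    (fun z hz => (hdiff z (Ioo_subset_Icc_self hz)).differentiableWithinAt)
  have hcC : c ∈ T.C := hIC (hsub (Ioo_subset_Icc_self hc))
  have hpos : 0 < y - x := sub_pos.mpr hxy
  have habs : |deriv T.k c| * (y - x) = |T.k y - T.k x| := by
    rw [hslope, abs_div, abs_of_pos hpos, div_mul_cancel₀]
    exact hpos.ne'
  calc T.γ * (y - x) ≤ |deriv T.k c| * (y - x) :=
        mul_le_mul_of_nonneg_right (T.k_expand c hcC).le hpos.le
    _ = |T.k y - T.k x| := habs

lemma k_expand_pair {I : Set ℝ} (hI : I = Icc (0:ℝ) T.a ∨ I = Icc T.b 1)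
    {x y : ℝ} (hx : x ∈ I) (hy : y ∈ I) :
    T.γ * |y - x| ≤ |T.k y - T.k x| := by
  rcases lt_trichotomy x y with hlt | heq | hlt
  · rw [abs_of_pos (sub_pos.mpr hlt)]
    exact T.k_expand_interval hI hx hy hlt
  · simp [heq]
  · rw [abs_of_neg (sub_neg.mpr hlt), neg_sub, abs_sub_comm]
    exact T.k_expand_interval hI hy hx hlt

lemma not_forall_in_C {u v : ℝ} (huv : u < v)
    (hC : ∀ y ∈ Icc u v, ∀ i, T.k^[i] y ∈ T.C) : False := by
  have hCsub : T.C ⊆ Icc (0:ℝ) 1 := by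
    rintro z (hz | hz)
    · exact ⟨hz.1, hz.2.trans T.a_le_one⟩
    · exact ⟨T.b_nonneg.trans hz.1, hz.2⟩
  have hmid : (T.a + T.b)/2 ∉ T.C := by
    rintro (hm | hm)
    · have := hm.2; have := T.hab; linarith
    · have := hm.1; have := T.hab; linarith
  have main : ∀ i, ContinuousOn (T.k^[i]) (Icc u v) ∧
      T.γ ^ i * (v - u) ≤ |T.k^[i] v - T.k^[i] u| := by
    intro i
    induction i with
    | zero =>
      refine ⟨by simpa using continuousOn_id, ?_⟩
      rw [pow_zero, one_mul, Function.iterate_zero_apply, Function.iterate_zero_apply,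
        abs_of_pos (sub_pos.mpr huv)]
    | succ i ih =>
      obtain ⟨hcont, hexp⟩ := ih
      have hmapsC : ∀ z ∈ Icc u v, T.k^[i] z ∈ T.C := fun z hz => hC z hz i
      have hs : T.k^[i] u ∈ T.C := hmapsC u ⟨le_refl u, huv.le⟩
      have ht : T.k^[i] v ∈ T.C := hmapsC v ⟨huv.le, le_refl v⟩
      have hsame : ∃ I, (I = Icc (0:ℝ) T.a ∨ I = Icc T.b 1) ∧
          T.k^[i] u ∈ I ∧ T.k^[i] v ∈ I := by
        by_contra hcon
        push_neg at hcon
        have hmid_mem : (T.a + T.b)/2 ∈ uIcc (T.k^[i] u) (T.k^[i] v) := by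
          have hab := T.hab
          rcases hs with hs' | hs' <;> rcases ht with ht' | ht'
          · exact absurd ht' (hcon _ (Or.inl rfl) hs')
          · rw [Set.mem_uIcc]
            left
            constructor
            · have := hs'.2; linarith
            · have := ht'.1; linarith
          · rw [Set.mem_uIcc]
            right
            constructor
            · have := ht'.2; linarith
            · have := hs'.1; linarith
          · exact absurd ht' (hcon _ (Or.inr rfl) hs')
        have hivt := intermediate_value_uIcc (f := T.k^[i]) (a := u) (b := v)
          (by rwa [uIcc_of_le huv.le])
        obtain ⟨w, hw, hweq⟩ := hivt hmid_mem
        rw [uIcc_of_le huv.le] at hw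
        exact hmid (hweq ▸ hmapsC w hw)
      obtain ⟨I, hI, hsI, htI⟩ := hsame
      have hstep := T.k_expand_pair hI hsI htI
      constructor
      · rw [Function.iterate_succ']
        exact ContinuousOn.comp
          (fun z hz => ((T.k_diff z hz).continuousAt).continuousWithinAt)
          hcont hmapsC
      · rw [Function.iterate_succ_apply' T.k i v, Function.iterate_succ_apply' T.k i u,
          pow_succ]
        calc T.γ ^ i * T.γ * (v - u) = T.γ * (T.γ ^ i * (v - u)) := by ring
          _ ≤ T.γ * |T.k^[i] v - T.k^[i] u| :=
              mul_le_mul_of_nonneg_left hexp (by linarith [T.hγ])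
          _ ≤ |T.k (T.k^[i] v) - T.k (T.k^[i] u)| := hstep
  obtain ⟨nn, hn⟩ := pow_unbounded_of_one_lt (1/(v-u)) T.hγ
  have h1 := (main nn).2
  have h2 := hCsub (hC v ⟨huv.le, le_refl v⟩ nn)
  have h3 := hCsub (hC u ⟨le_refl u, huv.le⟩ nn)
  have hb1 : |T.k^[nn] v - T.k^[nn] u| ≤ 1 := by
    rw [abs_le]
    constructor
    · have := h2.1; have := h3.2; linarith
    · have := h2.2; have := h3.1; linarith
  have hpos : 0 < v - u := sub_pos.mpr huv
  have hlast : 1/(v-u) * (v-u) < T.γ^nn * (v-u) := mul_lt_mul_of_pos_right hn hpos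
  rw [one_div_mul_cancel hpos.ne'] at hlast
  linarith

lemma contAt_iterate (j : ℕ) (z : ℝ) (hz : ∀ i < j, T.k^[i] z ∈ T.C) :
    ContinuousAt (T.k^[j]) z := by
  induction j with
  | zero => simpa using continuousAt_id
  | succ n ih =>
    rw [Function.iterate_succ']
    exact ContinuousAt.comp ((T.k_diff _ (hz n (by omega))).continuousAt)
      (ih (fun i hi => hz i (by omega)))

lemma exists_good_subinterval {u v : ℝ} (huv : u < v) :
    ∃ j u' v', u ≤ u' ∧ u' < v' ∧ v' ≤ v ∧
      ∀ y ∈ Ioo u' v', (∀ i < j, T.k^[i] y ∈ T.C) ∧ T.k^[j] y ∉ T.C := by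
  classical
  have hCc : IsClosed T.C := isClosed_Icc.union isClosed_Icc
  have hS : ∃ j, ∃ y ∈ Icc u v, (∀ i < j, T.k^[i] y ∈ T.C) ∧ T.k^[j] y ∉ T.C := by
    by_contra hcon
    push_neg at hcon
    apply T.not_forall_in_C huv
    intro y hy i
    induction i using Nat.strong_induction_on with
    | _ i ih => exact hcon i y hy ih
  obtain ⟨y₀, hy₀uv, hy₀C, hy₀j⟩ := Nat.find_spec hS
  set j := Nat.find hS with hjdef
  have hall : ∀ y ∈ Icc u v, ∀ i < j, T.k^[i] y ∈ T.C := by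
    intro y hy i hij
    by_contra hnot
    have hex : ∃ i', T.k^[i'] y ∉ T.C := ⟨i, hnot⟩
    have hle : Nat.find hex ≤ i := Nat.find_min' hex hnot
    have hP : ∃ y' ∈ Icc u v, (∀ i' < Nat.find hex, T.k^[i'] y' ∈ T.C) ∧
        T.k^[Nat.find hex] y' ∉ T.C :=
      ⟨y, hy, fun i' hi' => not_not.mp (Nat.find_min hex hi'), Nat.find_spec hex⟩
    have : j ≤ Nat.find hex := Nat.find_min' hS hP
    omega
  have hcontj : ContinuousAt (T.k^[j]) y₀ := T.contAt_iterate j y₀ (hall y₀ hy₀uv)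
  have hnear : ∀ᶠ y in nhds y₀, T.k^[j] y ∈ T.Cᶜ :=
    hcontj.eventually_mem (hCc.isOpen_compl.mem_nhds hy₀j)
  obtain ⟨ε, hε, hball⟩ := Metric.eventually_nhds_iff_ball.mp hnear
  refine ⟨j, max u (y₀ - ε), min v (y₀ + ε), le_max_left _ _, ?_, min_le_left _ _, ?_⟩
  · have h1 := hy₀uv.1
    have h2 := hy₀uv.2
    exact max_lt (lt_min huv (by linarith)) (lt_min (by linarith) (by linarith))
  · intro y hy
    have hy1 : y₀ - ε < y := lt_of_le_of_lt (le_max_right u _) hy.1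
    have hy2 : y < y₀ + ε := lt_of_lt_of_le hy.2 (min_le_right v _)
    have hyuv : y ∈ Icc u v := ⟨(le_max_left u _).trans hy.1.le, hy.2.le.trans (min_le_left v _)⟩
    refine ⟨hall y hyuv, ?_⟩
    have hd : dist y y₀ < ε := by
      rw [Real.dist_eq, abs_lt]
      constructor <;> linarith
    exact hball y hd

end ToyModel

/-- If a toy model has no wandering domain, then the set of points whose forward
orbit meets the critical line is dense in the domain. -/
theorem dense_critOrbit_of_no_wandering_domain (T : ToyModel)
    (h : ¬ HasWanderingDomain T) :
    Dense (critOrbit T) := by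
  rw [dense_iff_inter_open]
  rintro U hU ⟨p₀, hp₀⟩
  by_contra hcon
  rw [Set.not_nonempty_iff_eq_empty] at hcon
  have hdisj : ∀ p ∈ U, p ∉ critOrbit T := fun p hp hpc =>
    Set.eq_empty_iff_forall_notMem.mp hcon p ⟨hp, hpc⟩
  apply h
  cases hp₀case : p₀ with
  | inl q₀ =>
    have hPopen : IsOpen (Sum.inl ⁻¹' U :
        Set (↥(Icc (-1:ℝ) 0) × ↥(Icc (0:ℝ) 1))) := (isOpen_sum_iff.mp hU).1
    have hq₀mem : (q₀.1, q₀.2) ∈ (Sum.inl ⁻¹' U :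
        Set (↥(Icc (-1:ℝ) 0) × ↥(Icc (0:ℝ) 1))) := by
      show Sum.inl (q₀.1, q₀.2) ∈ U
      rw [Prod.mk.eta]
      rw [hp₀case] at hp₀
      exact hp₀
    obtain ⟨A, B, hA, hB, hx₀A, hy₀B, hAB⟩ := isOpen_prod_iff.mp hPopen q₀.1 q₀.2 hq₀mem
    obtain ⟨B₀, hB₀open, hB₀eq⟩ := isOpen_induced_iff.mp hB
    have hy₀B₀ : (q₀.2 : ℝ) ∈ B₀ := by
      rw [← hB₀eq] at hy₀B
      exact hy₀B
    obtain ⟨ε, hε, hball⟩ := Metric.isOpen_iff.mp hB₀open _ hy₀B₀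
    have hy₀01 : (q₀.2 : ℝ) ∈ Icc (0:ℝ) 1 := q₀.2.2
    set y₀ : ℝ := (q₀.2 : ℝ) with hy₀def
    set u : ℝ := max 0 (y₀ - ε/2) with hudef
    set v : ℝ := min 1 (y₀ + ε/2) with hvdef
    have huv : u < v := by
      have h1 := hy₀01.1
      have h2 := hy₀01.2
      exact max_lt (lt_min zero_lt_one (by linarith))
        (lt_min (by linarith) (by linarith))
    have hIccsub : Icc u v ⊆ Icc (0:ℝ) 1 :=
      Icc_subset_Icc (le_max_left _ _) (min_le_left _ _)
    have hIccball : ∀ y ∈ Icc u v, y ∈ Metric.ball y₀ ε := by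
      intro y hy
      have h1 : y₀ - ε/2 ≤ y := (le_max_right 0 _).trans hy.1
      have h2 : y ≤ y₀ + ε/2 := hy.2.trans (min_le_right 1 _)
      rw [Metric.mem_ball, Real.dist_eq, abs_lt]
      constructor <;> linarith
    obtain ⟨j, u', v', huu', hu'v', hv'v, hgood⟩ := T.exists_good_subinterval huv
    have hmemIcc : ∀ y ∈ Ioo u' v', y ∈ Icc u v := fun y hy =>
      ⟨huu'.trans hy.1.le, hy.2.le.trans hv'v⟩
    refine T.wandering_of_good (j := j)
      (V := Sum.inl '' (A ×ˢ (Subtype.val ⁻¹' Ioo u' v'))) ?_ ?_ ?_ ?_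
    · have hmidmem : (u' + v')/2 ∈ Ioo u' v' := ⟨by linarith, by linarith⟩
      exact ⟨Sum.inl (q₀.1, ⟨(u'+v')/2, hIccsub (hmemIcc _ hmidmem)⟩),
        Set.mem_image_of_mem _ ⟨hx₀A, hmidmem⟩⟩
    · exact Topology.IsOpenEmbedding.inl.isOpenMap _
        (hA.prod (isOpen_Ioo.preimage continuous_subtype_val))
    · rintro p ⟨⟨x, y⟩, ⟨hxA, hy⟩, rfl⟩
      exact hgood _ hy
    · rintro p ⟨⟨x, y⟩, ⟨hxA, hy⟩, rfl⟩
      refine hdisj _ (hAB ⟨hxA, ?_⟩)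
      rw [← hB₀eq]
      exact hball (hIccball _ (hmemIcc _ hy))
  | inr q₀ =>
    have hPopen : IsOpen (Sum.inr ⁻¹' U :
        Set (↥(Icc (0:ℝ) 1) × ↥(Icc (0:ℝ) 1))) := (isOpen_sum_iff.mp hU).2
    have hq₀mem : (q₀.1, q₀.2) ∈ (Sum.inr ⁻¹' U :
        Set (↥(Icc (0:ℝ) 1) × ↥(Icc (0:ℝ) 1))) := by
      show Sum.inr (q₀.1, q₀.2) ∈ U
      rw [Prod.mk.eta]
      rw [hp₀case] at hp₀
      exact hp₀
    obtain ⟨A, B, hA, hB, hx₀A, hy₀B, hAB⟩ := isOpen_prod_iff.mp hPopen q₀.1 q₀.2 hq₀mem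
    obtain ⟨B₀, hB₀open, hB₀eq⟩ := isOpen_induced_iff.mp hB
    have hy₀B₀ : (q₀.2 : ℝ) ∈ B₀ := by
      rw [← hB₀eq] at hy₀B
      exact hy₀B
    obtain ⟨ε, hε, hball⟩ := Metric.isOpen_iff.mp hB₀open _ hy₀B₀
    have hy₀01 : (q₀.2 : ℝ) ∈ Icc (0:ℝ) 1 := q₀.2.2
    set y₀ : ℝ := (q₀.2 : ℝ) with hy₀def
    set u : ℝ := max 0 (y₀ - ε/2) with hudef
    set v : ℝ := min 1 (y₀ + ε/2) with hvdef
    have huv : u < v := by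
      have h1 := hy₀01.1
      have h2 := hy₀01.2
      exact max_lt (lt_min zero_lt_one (by linarith))
        (lt_min (by linarith) (by linarith))
    have hIccsub : Icc u v ⊆ Icc (0:ℝ) 1 :=
      Icc_subset_Icc (le_max_left _ _) (min_le_left _ _)
    have hIccball : ∀ y ∈ Icc u v, y ∈ Metric.ball y₀ ε := by
      intro y hy
      have h1 : y₀ - ε/2 ≤ y := (le_max_right 0 _).trans hy.1
      have h2 : y ≤ y₀ + ε/2 := hy.2.trans (min_le_right 1 _)
      rw [Metric.mem_ball, Real.dist_eq, abs_lt]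
      constructor <;> linarith
    obtain ⟨j, u', v', huu', hu'v', hv'v, hgood⟩ := T.exists_good_subinterval huv
    have hmemIcc : ∀ y ∈ Ioo u' v', y ∈ Icc u v := fun y hy =>
      ⟨huu'.trans hy.1.le, hy.2.le.trans hv'v⟩
    refine T.wandering_of_good (j := j)
      (V := Sum.inr '' (A ×ˢ (Subtype.val ⁻¹' Ioo u' v'))) ?_ ?_ ?_ ?_
    · have hmidmem : (u' + v')/2 ∈ Ioo u' v' := ⟨by linarith, by linarith⟩
      exact ⟨Sum.inr (q₀.1, ⟨(u'+v')/2, hIccsub (hmemIcc _ hmidmem)⟩),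
        Set.mem_image_of_mem _ ⟨hx₀A, hmidmem⟩⟩
    · exact Topology.IsOpenEmbedding.inr.isOpenMap _
        (hA.prod (isOpen_Ioo.preimage continuous_subtype_val))
    · rintro p ⟨⟨x, y⟩, ⟨hxA, hy⟩, rfl⟩
      exact hgood _ hy
    · rintro p ⟨⟨x, y⟩, ⟨hxA, hy⟩, rfl⟩
      refine hdisj _ (hAB ⟨hxA, ?_⟩)
      rw [← hB₀eq]
      exact hball (hIccball _ (hmemIcc _ hy))

end
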